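/- arXiv:2312.12205 — 6 statements merged into one kernel-verified Lean document; each statement's English description precedes it below -/
import Mathlib

section
/- For x, y ∈ ℝⁿ and p ≥ 1, the function φ(x) = (1/(p+1))‖x‖₂^{p+1} satisfies φ(x) ≥ φ(y) + ⟨∇φ(y), x − y⟩ + (1/2^{p−1})·φ(x − y), where ∇φ(y) = ‖y‖₂^{p−1} y. -/
/-!
Write `⟪x, y⟫ = (2l - 1)‖x‖‖y‖` with `l ∈ [0, 1]`. Then `‖x - y‖²` is the `l`-convex combination
of `(‖x‖ - ‖y‖)²` and `(‖x‖ + ‖y‖)²`, so convexity of `t ↦ t^((p+1)/2)` bounds `‖x - y‖^(p+1)`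
by the same combination of `|‖x‖ - ‖y‖|^(p+1)` and `(‖x‖ + ‖y‖)^(p+1)`, and the inequality
follows from its one-dimensional instances at `(‖x‖, ‖y‖)` and `(-‖x‖, ‖y‖)`.

In dimension one the defect, as a function of `a`, has derivative
`(p+1)(ψ a - ψ b - 2^(1-p) ψ (a - b))` with `ψ t = |t|^(p-1) t`, which has the sign of `a - b`
because `ψ v - ψ u ≥ 2^(1-p) (v - u)^p` for `u ≤ v`: by superadditivity of `t ↦ t^p` when
`u` and `v` have the same sign, and by the power-mean inequality when `u ≤ 0 ≤ v`.
-/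

open scoped NNReal RealInnerProductSpace

open Real Set

namespace Real

lemma two_rpow_one_sub_mul_add_rpow_le {a b p : ℝ} (ha : 0 ≤ a) (hb : 0 ≤ b) (hp : 1 ≤ p) :
    2 ^ (1 - p) * (a + b) ^ p ≤ a ^ p + b ^ p := by
  have hmean : (a + b) ^ p ≤ 2 ^ (p - 1) * (a ^ p + b ^ p) := by
    lift a to ℝ≥0 using ha
    lift b to ℝ≥0 using hb
    exact_mod_cast NNReal.rpow_add_le_mul_rpow_add_rpow a b hp
  calc 2 ^ (1 - p) * (a + b) ^ p ≤ 2 ^ (1 - p) * (2 ^ (p - 1) * (a ^ p + b ^ p)) := by gcongr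
    _ = a ^ p + b ^ p := by rw [← mul_assoc, ← rpow_add two_pos]; simp

lemma abs_rpow_sub_one_mul_of_nonneg {t p : ℝ} (ht : 0 ≤ t) (hp : p ≠ 0) :
    |t| ^ (p - 1) * t = t ^ p := by
  rw [abs_of_nonneg ht, ← rpow_add_one' ht (by simpa using hp), sub_add_cancel]

lemma abs_rpow_sub_one_mul_neg (t p : ℝ) : |-t| ^ (p - 1) * -t = -(|t| ^ (p - 1) * t) := by
  rw [abs_neg, mul_neg]

lemma two_rpow_mul_sub_rpow_le_of_nonneg {u v p : ℝ} (hu : 0 ≤ u) (huv : u ≤ v) (hp : 1 ≤ p) :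
    2 ^ (1 - p) * (v - u) ^ p ≤ |v| ^ (p - 1) * v - |u| ^ (p - 1) * u := by
  have hp0 : p ≠ 0 := by positivity
  rw [abs_rpow_sub_one_mul_of_nonneg hu hp0, abs_rpow_sub_one_mul_of_nonneg (hu.trans huv) hp0]
  have hsuper := add_rpow_le_rpow_add hu (sub_nonneg.2 huv) hp
  rw [add_sub_cancel] at hsuper
  have hshrink := mul_le_of_le_one_left (rpow_nonneg (sub_nonneg.2 huv) p)
    (rpow_le_one_of_one_le_of_nonpos one_le_two (by linarith : 1 - p ≤ 0))
  linarith

lemma two_rpow_mul_sub_rpow_le_of_nonpos_of_nonneg {u v p : ℝ} (hu : u ≤ 0) (hv : 0 ≤ v)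
    (hp : 1 ≤ p) : 2 ^ (1 - p) * (v - u) ^ p ≤ |v| ^ (p - 1) * v - |u| ^ (p - 1) * u := by
  have hp0 : p ≠ 0 := by positivity
  rw [← neg_neg u, abs_rpow_sub_one_mul_neg, abs_rpow_sub_one_mul_of_nonneg hv hp0,
    abs_rpow_sub_one_mul_of_nonneg (neg_nonneg.2 hu) hp0, sub_neg_eq_add, sub_neg_eq_add]
  exact two_rpow_one_sub_mul_add_rpow_le hv (neg_nonneg.2 hu) hp

/-- Strong monotonicity of `t ↦ |t|^(p-1) t`, the derivative of `t ↦ |t|^(p+1) / (p+1)`. -/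
lemma two_rpow_mul_sub_rpow_le {u v p : ℝ} (huv : u ≤ v) (hp : 1 ≤ p) :
    2 ^ (1 - p) * (v - u) ^ p ≤ |v| ^ (p - 1) * v - |u| ^ (p - 1) * u := by
  rcases le_total 0 u with hu | hu
  · exact two_rpow_mul_sub_rpow_le_of_nonneg hu huv hp
  rcases le_total 0 v with hv | hv
  · exact two_rpow_mul_sub_rpow_le_of_nonpos_of_nonneg hu hv hp
  have h := two_rpow_mul_sub_rpow_le_of_nonneg (neg_nonneg.2 hv) (neg_le_neg huv) hp
  rwa [abs_rpow_sub_one_mul_neg, abs_rpow_sub_one_mul_neg, neg_sub_neg, sub_neg_eq_add,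
    neg_add_eq_sub] at h

lemma abs_rpow_uniformConvex {p : ℝ} (hp : 1 ≤ p) (a b : ℝ) :
    |b| ^ (p + 1) + (p + 1) * (|b| ^ (p - 1) * b) * (a - b) + 2 ^ (1 - p) * |a - b| ^ (p + 1)
      ≤ |a| ^ (p + 1) := by
  set c : ℝ := 2 ^ (1 - p)
  set g : ℝ := |b| ^ (p - 1) * b
  let G : ℝ → ℝ := fun t ↦ |t| ^ (p + 1) - (p + 1) * g * t - c * |t - b| ^ (p + 1)
  let G' : ℝ → ℝ := fun t ↦
    (p + 1) * (|t| ^ (p - 1) * t - g - c * (|t - b| ^ (p - 1) * (t - b)))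
  have hG : ∀ t, HasDerivAt G (G' t) t := by
    intro t
    have hq : 1 < p + 1 := by linarith
    have h := (hasDerivAt_abs_rpow (t - b) hq).comp_sub_const t b
    refine (((hasDerivAt_abs_rpow t hq).sub ((hasDerivAt_id t).const_mul ((p + 1) * g))).sub
      (h.const_mul c)).congr_deriv ?_
    rw [show p + 1 - 2 = p - 1 by ring]
    ring
  have hGcont : ContinuousOn G univ :=
    continuous_iff_continuousAt.2 (fun t ↦ (hG t).continuousAt) |>.continuousOn
  have hmono : MonotoneOn G (Ici b) := by
    refine monotoneOn_of_hasDerivWithinAt_nonneg (convex_Ici b) (hGcont.mono (subset_univ _))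
      (fun t _ ↦ (hG t).hasDerivWithinAt) fun t ht ↦ ?_
    rw [interior_Ici, mem_Ioi] at ht
    have h := two_rpow_mul_sub_rpow_le ht.le hp
    rw [← abs_rpow_sub_one_mul_of_nonneg (sub_nonneg.2 ht.le) (by positivity)] at h
    exact mul_nonneg (by linarith) (by linarith)
  have hanti : AntitoneOn G (Iic b) := by
    refine antitoneOn_of_hasDerivWithinAt_nonpos (convex_Iic b) (hGcont.mono (subset_univ _))
      (fun t _ ↦ (hG t).hasDerivWithinAt) fun t ht ↦ ?_
    rw [interior_Iic, mem_Iio] at ht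
    have h := two_rpow_mul_sub_rpow_le ht.le hp
    rw [← abs_rpow_sub_one_mul_of_nonneg (sub_nonneg.2 ht.le) (by positivity), ← neg_sub t b,
      abs_rpow_sub_one_mul_neg] at h
    exact mul_nonpos_of_nonneg_of_nonpos (by linarith) (by linarith)
  have hGba : G b ≤ G a := by
    rcases le_total b a with hba | hab
    · exact hmono self_mem_Ici hba hba
    · exact hanti hab self_mem_Iic hab
  simp only [G, sub_self, abs_zero, zero_rpow (by linarith : p + 1 ≠ 0), mul_zero] at hGba
  linarith

end Real

section InnerProductSpace

variable {F : Type*} [NormedAddCommGroup F] [InnerProductSpace ℝ F]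

lemma exists_mem_Icc_real_inner_eq (x y : F) :
    ∃ l ∈ Icc (0 : ℝ) 1, ⟪x, y⟫ = (2 * l - 1) * (‖x‖ * ‖y‖) := by
  have hseg : ⟪x, y⟫ ∈ segment ℝ (-(‖x‖ * ‖y‖)) (‖x‖ * ‖y‖) := by
    rw [segment_eq_Icc (neg_le_self (by positivity))]
    exact abs_le.1 (abs_real_inner_le_norm x y)
  obtain ⟨k, l, hk, hl, hkl, hxy⟩ := hseg
  refine ⟨l, ⟨hl, by linarith⟩, ?_⟩
  rw [← hxy, ← hkl, smul_eq_mul, smul_eq_mul]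
  ring

lemma norm_sub_rpow_le {q l : ℝ} (hq : 2 ≤ q) {x y : F} (hl : l ∈ Icc (0 : ℝ) 1)
    (hxy : ⟪x, y⟫ = (2 * l - 1) * (‖x‖ * ‖y‖)) :
    ‖x - y‖ ^ q ≤ l * |‖x‖ - ‖y‖| ^ q + (1 - l) * (‖x‖ + ‖y‖) ^ q := by
  have hsq : ∀ t : ℝ, (t ^ 2) ^ (q / 2) = |t| ^ q := fun t ↦ by
    rw [← sq_abs, ← rpow_natCast, ← rpow_mul (abs_nonneg t)]
    ring_nf
  have hr : ‖x - y‖ ^ 2 = l * (‖x‖ - ‖y‖) ^ 2 + (1 - l) * (‖x‖ + ‖y‖) ^ 2 := by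
    rw [norm_sub_sq_real, hxy]
    ring
  calc ‖x - y‖ ^ q = (l * (‖x‖ - ‖y‖) ^ 2 + (1 - l) * (‖x‖ + ‖y‖) ^ 2) ^ (q / 2) := by
        rw [← hr, hsq, abs_norm]
    _ ≤ l * ((‖x‖ - ‖y‖) ^ 2) ^ (q / 2) + (1 - l) * ((‖x‖ + ‖y‖) ^ 2) ^ (q / 2) :=
        (convexOn_rpow (by linarith)).2 (mem_Ici.2 (sq_nonneg _)) (mem_Ici.2 (sq_nonneg _))
          hl.1 (sub_nonneg.2 hl.2) (by ring)
    _ = l * |‖x‖ - ‖y‖| ^ q + (1 - l) * (‖x‖ + ‖y‖) ^ q := by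
        rw [hsq, hsq, abs_of_nonneg (by positivity : (0 : ℝ) ≤ ‖x‖ + ‖y‖)]

theorem norm_rpow_uniformConvex {p : ℝ} (hp : 1 ≤ p) (x y : F) :
    ‖y‖ ^ (p + 1) + (p + 1) * ⟪‖y‖ ^ (p - 1) • y, x - y⟫ + 2 ^ (1 - p) * ‖x - y‖ ^ (p + 1)
      ≤ ‖x‖ ^ (p + 1) := by
  obtain ⟨l, hl, hxy⟩ := exists_mem_Icc_real_inner_eq x y
  have hdist := norm_sub_rpow_le (q := p + 1) (by linarith) hl hxy
  have hpos := Real.abs_rpow_uniformConvex hp ‖x‖ ‖y‖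
  have hneg := Real.abs_rpow_uniformConvex hp (-‖x‖) ‖y‖
  rw [← neg_add', abs_neg, abs_of_nonneg (by positivity : (0 : ℝ) ≤ ‖x‖ + ‖y‖)] at hneg
  simp only [abs_norm, abs_neg] at hpos hneg
  have hinner :
      ⟪‖y‖ ^ (p - 1) • y, x - y⟫ = ‖y‖ ^ (p - 1) * ‖y‖ * ((2 * l - 1) * ‖x‖ - ‖y‖) := by
    rw [real_inner_smul_left, inner_sub_right, real_inner_comm, hxy,
      real_inner_self_eq_norm_mul_norm]
    ring
  rw [hinner]
  linarith [mul_le_mul_of_nonneg_left hpos hl.1,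
    mul_le_mul_of_nonneg_left hneg (sub_nonneg.2 hl.2),
    mul_le_mul_of_nonneg_left hdist (rpow_nonneg zero_le_two (1 - p))]

end InnerProductSpace

/-- Uniform convexity inequality for `φ(x) = (1/(p+1))‖x‖₂^{p+1}` on `ℝⁿ` with
Euclidean norm: `φ(x) ≥ φ(y) + ⟨∇φ(y), x − y⟩ + 2^{1−p} φ(x − y)`, where
`∇φ(y) = ‖y‖^{p−1} y`. -/
theorem stmt0 (n : ℕ) (p : ℝ) (hp : 1 ≤ p)
    (x y : EuclideanSpace ℝ (Fin n)) :
    (1 / (p + 1)) * ‖x‖ ^ (p + 1) ≥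
      (1 / (p + 1)) * ‖y‖ ^ (p + 1)
        + ⟪(‖y‖ ^ (p - 1) : ℝ) • y, x - y⟫
        + (1 / 2 ^ (p - 1)) * ((1 / (p + 1)) * ‖x - y‖ ^ (p + 1)) := by
  have hc : 1 / (2 : ℝ) ^ (p - 1) = 2 ^ (1 - p) := by
    rw [one_div, ← rpow_neg zero_le_two, neg_sub]
  have hp1 : 0 < p + 1 := by linarith
  rw [ge_iff_le, hc, ← mul_le_mul_iff_of_pos_left hp1]
  field_simp
  linarith [norm_rpow_uniformConvex hp x y]
end

section
/- For real numbers a, b and p ≥ 1, the one-dimensional function φ(t) = (1/(p+1))|t|^{p+1} satisfies φ(a) ≥ φ(b) + φ'(b)(a − b) + (1/2^{p−1})·φ(a − b), where φ'(b) = |b|^{p−1} b. -/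
/-!
Write `ψ(t) = |t|^{p-1} t = φ'(t)`. The heart of the matter is the one-dimensional estimate
`ψ(x) - ψ(y) ≥ 2^{1-p} (x - y)^p` for `y ≤ x`: when `x` and `y` have the same sign it is the
superadditivity of `t ↦ t^p`, and when they have opposite signs it is the power-mean inequality
`((u + v) / 2)^p ≤ (u^p + v^p) / 2`. It says precisely that the derivative of
`x ↦ φ(x) - φ(b) - ψ(b)(x - b) - 2^{1-p} φ(x - b)` is `≤ 0` left of `b` and `≥ 0` right of
`b`, so this function, which vanishes at `b`, is nonnegative.
-/

open Set

noncomputable def signedRpow (p t : ℝ) : ℝ := |t| ^ (p - 1) * t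

section SignedRpow

variable {p : ℝ}

lemma signedRpow_of_nonneg (hp : p ≠ 0) {t : ℝ} (ht : 0 ≤ t) : signedRpow p t = t ^ p := by
  rw [signedRpow, abs_of_nonneg ht]
  rcases ht.eq_or_lt with rfl | ht
  · rw [mul_zero, Real.zero_rpow hp]
  · rw [← Real.rpow_add_one ht.ne', sub_add_cancel]

lemma signedRpow_neg (t : ℝ) : signedRpow p (-t) = -signedRpow p t := by
  rw [signedRpow, signedRpow, abs_neg, mul_neg]

lemma hasDerivAt_abs_rpow_add_one_div (hp : 0 < p) (x : ℝ) :
    HasDerivAt (fun t ↦ 1 / (p + 1) * |t| ^ (p + 1)) (signedRpow p x) x := by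
  refine ((hasDerivAt_abs_rpow x (by linarith : 1 < p + 1)).const_mul (1 / (p + 1))).congr_deriv ?_
  rw [signedRpow, show p + 1 - 2 = p - 1 by ring]
  field_simp

lemma rpow_add_div_le_rpow_add_rpow (hp : 1 ≤ p) {u v : ℝ} (hu : 0 ≤ u) (hv : 0 ≤ v) :
    (u + v) ^ p / 2 ^ (p - 1) ≤ u ^ p + v ^ p := by
  lift u to NNReal using hu
  lift v to NNReal using hv
  rw [div_le_iff₀' (by positivity)]
  exact_mod_cast NNReal.rpow_add_le_mul_rpow_add_rpow u v hp

lemma signedRpow_add_signedRpow_sub_le (hp : 1 ≤ p) {x y : ℝ} (hyx : y ≤ x) :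
    signedRpow p y + 1 / 2 ^ (p - 1) * signedRpow p (x - y) ≤ signedRpow p x := by
  have hp0 : p ≠ 0 := by positivity
  rw [signedRpow_of_nonneg hp0 (sub_nonneg.2 hyx), one_div_mul_eq_div, ← le_sub_iff_add_le']
  have one_le_two_rpow : 1 ≤ (2 : ℝ) ^ (p - 1) := Real.one_le_rpow one_le_two (by linarith)
  have same_sign {x y : ℝ} (hy : 0 ≤ y) (hyx : y ≤ x) :
      (x - y) ^ p / 2 ^ (p - 1) ≤ signedRpow p x - signedRpow p y := by
    rw [signedRpow_of_nonneg hp0 hy, signedRpow_of_nonneg hp0 (hy.trans hyx)]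
    calc (x - y) ^ p / 2 ^ (p - 1)
        ≤ (x - y) ^ p := div_le_self (by positivity) one_le_two_rpow
      _ ≤ (x - y + y) ^ p - y ^ p := by
          linarith [Real.add_rpow_le_rpow_add (sub_nonneg.2 hyx) hy hp]
      _ = x ^ p - y ^ p := by rw [sub_add_cancel]
  rcases le_total 0 y with hy | hy
  · exact same_sign hy hyx
  rcases le_total x 0 with hx | hx
  · have := same_sign (neg_nonneg.2 hx) (neg_le_neg hyx)
    rw [signedRpow_neg, signedRpow_neg, neg_sub_neg] at this
    linarith
  · have := rpow_add_div_le_rpow_add_rpow hp hx (neg_nonneg.2 hy)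
    rw [← signedRpow_of_nonneg hp0 hx, ← signedRpow_of_nonneg hp0 (neg_nonneg.2 hy),
      signedRpow_neg] at this
    simp only [← sub_eq_add_neg] at this
    linarith

lemma signedRpow_le_add_signedRpow_sub (hp : 1 ≤ p) {x y : ℝ} (hxy : x ≤ y) :
    signedRpow p x ≤ signedRpow p y + 1 / 2 ^ (p - 1) * signedRpow p (x - y) := by
  have := signedRpow_add_signedRpow_sub_le hp (neg_le_neg hxy)
  rw [neg_sub_neg, ← neg_sub x y, signedRpow_neg, signedRpow_neg, signedRpow_neg] at this
  linarith

end SignedRpow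

lemma le_of_hasDerivAt_nonpos_of_nonneg {f f' : ℝ → ℝ} {b : ℝ}
    (hf : ∀ x, HasDerivAt f (f' x) x) (hleft : ∀ x < b, f' x ≤ 0)
    (hright : ∀ x, b < x → 0 ≤ f' x) (a : ℝ) : f b ≤ f a := by
  have hcont : Continuous f := continuous_iff_continuousAt.2 fun x ↦ (hf x).continuousAt
  rcases le_total b a with hba | hab
  · exact monotoneOn_of_hasDerivWithinAt_nonneg (convex_Ici b) hcont.continuousOn
      (fun x _ ↦ (hf x).hasDerivWithinAt) (by simpa only [interior_Ici, mem_Ioi] using hright)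
      self_mem_Ici hba hba
  · exact antitoneOn_of_hasDerivWithinAt_nonpos (convex_Iic b) hcont.continuousOn
      (fun x _ ↦ (hf x).hasDerivWithinAt) (by simpa only [interior_Iic, mem_Iio] using hleft)
      hab self_mem_Iic hab

/-- One-dimensional uniform convexity inequality for `φ(t) = (1/(p+1))|t|^{p+1}`:
`φ(a) ≥ φ(b) + φ'(b)(a − b) + 2^{1−p} φ(a − b)` with `φ'(b) = |b|^{p−1} b`. -/
theorem stmt1 (p : ℝ) (hp : 1 ≤ p) (a b : ℝ) :
    (1 / (p + 1)) * |a| ^ (p + 1) ≥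
      (1 / (p + 1)) * |b| ^ (p + 1)
        + (|b| ^ (p - 1) * b) * (a - b)
        + (1 / 2 ^ (p - 1)) * ((1 / (p + 1)) * |a - b| ^ (p + 1)) := by
  have hp0 : 0 < p := by linarith
  set φ : ℝ → ℝ := fun t ↦ 1 / (p + 1) * |t| ^ (p + 1)
  have hφ (x : ℝ) : HasDerivAt φ (signedRpow p x) x := hasDerivAt_abs_rpow_add_one_div hp0 x
  have hderiv (x : ℝ) : HasDerivAt
      (fun x ↦ φ x - (φ b + signedRpow p b * (x - b) + 1 / 2 ^ (p - 1) * φ (x - b)))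
      (signedRpow p x - (signedRpow p b + 1 / 2 ^ (p - 1) * signedRpow p (x - b))) x := by
    have hshift := (hasDerivAt_id' x).sub_const b
    refine ((hφ x).sub (((hshift.const_mul (signedRpow p b)).const_add (φ b)).add
      (((hφ (x - b)).comp x hshift).const_mul (1 / 2 ^ (p - 1))))).congr_deriv ?_
    ring
  have key := le_of_hasDerivAt_nonpos_of_nonneg hderiv
    (fun x hxb ↦ sub_nonpos.2 (signedRpow_le_add_signedRpow_sub hp hxb.le))
    (fun x hbx ↦ sub_nonneg.2 (signedRpow_add_signedRpow_sub_le hp hbx.le)) a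
  have hφ0 : φ 0 = 0 := by simp [φ, Real.zero_rpow (by linarith : p + 1 ≠ 0)]
  simp only [sub_self, mul_zero, hφ0, add_zero] at key
  exact sub_nonneg.1 key
end

section
/- Let ψ : ℝᵐ → ℝ ∪ {+∞} be proper, lsc, convex, let λ > 0, p ≥ 1, and let φ = (1/(p+1))‖·‖^{p+1} for a norm ‖·‖ satisfying the uniform convexity inequality φ(x) ≥ φ(y) + ⟨∇φ(y), x−y⟩ + 2^{1−p}φ(x−y). Suppose w ∈ ℝᵐ, ε ≥ 0, v is an ε-subgradient of ψ at y⁺, and y⁺ = w − λ∇φ*(v). Then for all y ∈ ℝᵐ: ψ(y⁺) ≤ ψ(y) + λ^{−p}φ(w − y) − 2^{1−p}λ^{−p}φ(y⁺ − y) + ε. -/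
open scoped RealInnerProductSpace

/-- One step of the inexact power proximal point method: if `ψ` is proper lsc convex,
`φ` (a power of a norm, with gradient `Dφ`) satisfies the uniform convexity inequality, `v`
is an `ε`-subgradient of `ψ` at `y⁺`, and `y⁺ = w − λ∇φ*(v)` (equivalently
`v = λ^{−p} Dφ(w − y⁺)`), then for all `y`:
`ψ(y⁺) ≤ ψ(y) + λ^{−p}φ(w − y) − 2^{1−p}λ^{−p}φ(y⁺ − y) + ε`. -/
theorem stmt3 (m : ℕ) (ψ : EuclideanSpace ℝ (Fin m) → ℝ)
    (hψconv : ConvexOn ℝ Set.univ ψ) (hψlsc : LowerSemicontinuous ψ)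
    (lam p : ℝ) (hlam : 0 < lam) (hp : 1 ≤ p)
    (φ : EuclideanSpace ℝ (Fin m) → ℝ) (Dφ : EuclideanSpace ℝ (Fin m) → EuclideanSpace ℝ (Fin m))
    (hφ : ∀ x, φ x = (1 / (p + 1)) * ‖x‖ ^ (p + 1))
    (hunif : ∀ x y, φ x ≥ φ y + ⟪Dφ y, x - y⟫ + 2 ^ (1 - p) * φ (x - y))
    (w yplus v : EuclideanSpace ℝ (Fin m)) (ε : ℝ) (hε : 0 ≤ ε)
    (hsub : ∀ y, ψ y ≥ ψ yplus + ⟪v, y - yplus⟫ - ε)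
    (hupd : v = (lam ^ (-p) : ℝ) • Dφ (w - yplus)) :
    ∀ y, ψ yplus ≤ ψ y + lam ^ (-p) * φ (w - y)
        - 2 ^ (1 - p) * lam ^ (-p) * φ (yplus - y) + ε := by
  intro y
  have hsub' := hsub y
  have hu := hunif (w - y) (w - yplus)
  have hkey : (w - y) - (w - yplus) = yplus - y := by abel
  rw [hkey] at hu
  have hφnn : 0 ≤ φ (w - yplus) := by
    rw [hφ]
    positivity
  have hlp : (0:ℝ) < lam ^ (-p) := Real.rpow_pos_of_pos hlam _
  have hip : ⟪v, y - yplus⟫ = lam ^ (-p) * ⟪Dφ (w - yplus), y - yplus⟫ := by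
    rw [hupd, real_inner_smul_left]
  have hip2 : ⟪Dφ (w - yplus), yplus - y⟫ = - ⟪Dφ (w - yplus), y - yplus⟫ := by
    have : yplus - y = -(y - yplus) := by abel
    rw [this, inner_neg_right]
  rw [hip2] at hu
  nlinarith [mul_le_mul_of_nonneg_left (by linarith : φ (w - yplus) - ⟪Dφ (w - yplus), y - yplus⟫ + 2 ^ (1 - p) * φ (yplus - y) ≤ φ (w - y)) hlp.le, mul_nonneg hlp.le hφnn]
end

section
/- Let ψ : ℝᵐ → ℝ ∪ {+∞} be proper lsc convex with minimizer y⋆, let λ > 0, p ≥ 1, φ = (1/(p+1))‖·‖₂^{p+1}, and let the iterates satisfy: w^k = (A_k/A_{k+1}) y^k + (1 − A_k/A_{k+1}) y⁰ with A_k = k^{p+1}, v^k an ε_k-subgradient of ψ at y^{k+1}, y^{k+1} = w^k − λ∇φ*(v^k), and ε_k = c/(k+1)^{p+1} for some c ≥ 0. Then for all k ≥ 1: ψ(y^k) − ψ(y⋆) ≤ (λ^{−p}(p+1)^p‖y⁰ − y⋆‖^{p+1} + c)/k^p. -/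
open scoped RealInnerProductSpace

/-!
Weight the `ε_k`-subgradient inequality at `y^{k+1}` by `A_k` (tested at `y^k`) and by
`a_{k+1} = A_{k+1} - A_k` (tested at `y⋆`). Since `A_{k+1} w^k = A_k y^k + a_{k+1} y⁰`, this gives
`A_{k+1}(ψ(y^{k+1}) - ψ(y⋆)) ≤ A_k(ψ(y^k) - ψ(y⋆)) - A_{k+1}⟪v^k, u⟫ + a_{k+1}⟪v^k, y⁰ - y⋆⟫ + c`
with `u = w^k - y^{k+1}`. As `v^k = λ^{-p}‖u‖^{p-1}u`, the inner products are `λ^{-p}‖u‖^{p+1}` and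
at most `λ^{-p}‖u‖^p‖y⁰ - y⋆‖`. Convexity of `t ↦ t^{p+1}` gives `a_{k+1} ≤ (p+1)(k+1)^p`, and then
Young's inequality bounds the two inner-product terms by `λ^{-p}(p+1)^p‖y⁰ - y⋆‖^{p+1}`.
Telescoping, `A_k(ψ(y^k) - ψ(y⋆))` grows at most linearly in `k`.
-/

theorem rpow_add_one_sub_rpow_le {a b p : ℝ} (ha : 0 ≤ a) (hb : 0 < b) (hp : 0 ≤ p) :
    b ^ (p + 1) - a ^ (p + 1) ≤ (p + 1) * b ^ p * (b - a) := by
  have hbern := one_add_mul_self_le_rpow_one_add (s := a / b - 1)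
    (by linarith [div_nonneg ha hb.le]) (by linarith : 1 ≤ p + 1)
  rw [add_sub_cancel, Real.div_rpow ha hb.le, le_div_iff₀ (by positivity),
    Real.rpow_add_one hb.ne'] at hbern
  have hab : (a / b - 1) * (b ^ p * b) = (a - b) * b ^ p := by field_simp
  rw [Real.rpow_add_one hb.ne']
  linear_combination hbern - (p + 1) * hab

theorem young_add_one_mul_mul_rpow_le {p D s : ℝ} (hp : 0 < p) (hD : 0 ≤ D) (hs : 0 ≤ s) :
    (p + 1) * D * s ^ p ≤ s ^ (p + 1) + (p + 1) ^ p * D ^ (p + 1) := by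
  have hp1 : 0 < p + 1 := by linarith
  have amgm := Real.geom_mean_le_arith_mean2_weighted (w₁ := p / (p + 1)) (w₂ := 1 / (p + 1))
    (p₁ := s ^ (p + 1)) (p₂ := ((p + 1) * D) ^ (p + 1)) (by positivity) (by positivity)
    (by positivity) (by positivity) (by field_simp)
  rw [← Real.rpow_mul hs, ← Real.rpow_mul (by positivity), mul_div_cancel₀ _ hp1.ne',
    mul_one_div_cancel hp1.ne', Real.rpow_one, Real.mul_rpow hp1.le hD,
    Real.rpow_add_one hp1.ne' p] at amgm
  have hsp : 0 ≤ s ^ (p + 1) := by positivity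
  have : p / (p + 1) * s ^ (p + 1) ≤ s ^ (p + 1) :=
    mul_le_of_le_one_left hsp ((div_le_one hp1).2 (by linarith))
  calc (p + 1) * D * s ^ p = s ^ p * ((p + 1) * D) := by ring
    _ ≤ p / (p + 1) * s ^ (p + 1) + 1 / (p + 1) * ((p + 1) ^ p * (p + 1) * D ^ (p + 1)) := amgm
    _ ≤ s ^ (p + 1) + (p + 1) ^ p * D ^ (p + 1) := by
      rw [show 1 / (p + 1) * ((p + 1) ^ p * (p + 1) * D ^ (p + 1)) = (p + 1) ^ p * D ^ (p + 1) by
        field_simp]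
      linarith

theorem rpow_sub_one_mul_self {p : ℝ} (hp : p ≠ 0) {r : ℝ} (hr : 0 ≤ r) :
    r ^ (p - 1) * r = r ^ p := by
  rw [← Real.rpow_add_one' hr (by simpa using hp), sub_add_cancel]

section InnerProductSpace

variable {E : Type*} [NormedAddCommGroup E] [InnerProductSpace ℝ E]

theorem inner_rpow_smul_self {p : ℝ} (hp : 0 < p) (c : ℝ) (u : E) :
    ⟪(c * ‖u‖ ^ (p - 1)) • u, u⟫ = c * ‖u‖ ^ (p + 1) := by
  rw [real_inner_smul_left, real_inner_self_eq_norm_mul_norm,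
    Real.rpow_add_one' (norm_nonneg u) (by linarith), ← rpow_sub_one_mul_self hp.ne' (norm_nonneg u)]
  ring

theorem norm_rpow_smul_self {p : ℝ} (hp : 0 < p) (c : ℝ) (u : E) :
    ‖(c * ‖u‖ ^ (p - 1)) • u‖ = |c| * ‖u‖ ^ p := by
  rw [norm_smul, Real.norm_eq_abs, abs_mul, abs_of_nonneg (Real.rpow_nonneg (norm_nonneg u) _),
    ← rpow_sub_one_mul_self hp.ne' (norm_nonneg u)]
  ring

theorem averaged_eps_subgradient_bound {ψ : E → ℝ} {y₀ ystar y y' w v : E} {A B ε : ℝ}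
    (hA : 0 ≤ A) (hAB : A ≤ B) (hB : 0 < B) (hw : w = (A / B) • y + (1 - A / B) • y₀)
    (hsub : ∀ z, ψ z ≥ ψ y' + ⟪v, z - y'⟫ - ε) :
    B * (ψ y' - ψ ystar) ≤
      A * (ψ y - ψ ystar) - B * ⟪v, w - y'⟫ + (B - A) * ⟪v, y₀ - ystar⟫ + B * ε := by
  have hcomb : A * ⟪v, y - y'⟫ + (B - A) * ⟪v, ystar - y'⟫ =
      B * ⟪v, w - y'⟫ - (B - A) * ⟪v, y₀ - ystar⟫ := by
    simp only [← real_inner_smul_right, ← inner_add_right, ← inner_sub_right]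
    congr 1
    rw [hw]
    match_scalars <;> field_simp <;> ring
  have h₁ := mul_le_mul_of_nonneg_left (hsub y) hA
  have h₂ := mul_le_mul_of_nonneg_left (hsub ystar) (sub_nonneg.2 hAB)
  linear_combination h₁ + h₂ - hcomb

theorem power_step_bound {L p K a : ℝ} (hp : 0 < p) (hL : 0 ≤ L) (hK : 0 ≤ K) (ha : 0 ≤ a)
    (haK : a ≤ (p + 1) * K ^ p) (u z : E) :
    -(K ^ (p + 1) * ⟪(L * ‖u‖ ^ (p - 1)) • u, u⟫) + a * ⟪(L * ‖u‖ ^ (p - 1)) • u, z⟫ ≤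
      L * (p + 1) ^ p * ‖z‖ ^ (p + 1) := by
  have hcs : ⟪(L * ‖u‖ ^ (p - 1)) • u, z⟫ ≤ L * ‖u‖ ^ p * ‖z‖ :=
    (real_inner_le_norm _ _).trans_eq (by rw [norm_rpow_smul_self hp, abs_of_nonneg hL])
  have young := young_add_one_mul_mul_rpow_le hp (norm_nonneg z) (mul_nonneg hK (norm_nonneg u))
  rw [Real.mul_rpow hK (norm_nonneg u), Real.mul_rpow hK (norm_nonneg u)] at young
  rw [inner_rpow_smul_self hp]
  calc -(K ^ (p + 1) * (L * ‖u‖ ^ (p + 1))) + a * ⟪(L * ‖u‖ ^ (p - 1)) • u, z⟫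
      ≤ -(K ^ (p + 1) * (L * ‖u‖ ^ (p + 1))) + (p + 1) * K ^ p * (L * ‖u‖ ^ p * ‖z‖) := by
        linarith [(mul_le_mul_of_nonneg_left hcs ha).trans
          (mul_le_mul_of_nonneg_right haK (by positivity))]
    _ = L * ((p + 1) * ‖z‖ * (K ^ p * ‖u‖ ^ p) - K ^ (p + 1) * ‖u‖ ^ (p + 1)) := by ring
    _ ≤ L * (p + 1) ^ p * ‖z‖ ^ (p + 1) := by nlinarith

theorem power_prox_lyapunov_step {ψ : E → ℝ} {y₀ ystar y y' w v : E} {L p x ε : ℝ}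
    (hp : 0 < p) (hL : 0 ≤ L) (hx : 0 ≤ x)
    (hw : w = (x ^ (p + 1) / (x + 1) ^ (p + 1)) • y + (1 - x ^ (p + 1) / (x + 1) ^ (p + 1)) • y₀)
    (hsub : ∀ z, ψ z ≥ ψ y' + ⟪v, z - y'⟫ - ε)
    (hv : v = (L * ‖w - y'‖ ^ (p - 1)) • (w - y')) :
    (x + 1) ^ (p + 1) * (ψ y' - ψ ystar) ≤
      x ^ (p + 1) * (ψ y - ψ ystar) + L * (p + 1) ^ p * ‖y₀ - ystar‖ ^ (p + 1) +
        (x + 1) ^ (p + 1) * ε := by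
  have hx1 : 0 < x + 1 := by linarith
  have hAB : x ^ (p + 1) ≤ (x + 1) ^ (p + 1) :=
    Real.rpow_le_rpow hx (by linarith) (by linarith)
  have hdescent := averaged_eps_subgradient_bound (ystar := ystar) (Real.rpow_nonneg hx _) hAB
    (by positivity) hw hsub
  have hpower := power_step_bound hp hL hx1.le (sub_nonneg.2 hAB)
    (by simpa using rpow_add_one_sub_rpow_le hx hx1 hp.le) (w - y') (y₀ - ystar)
  rw [← hv] at hpower
  linarith

end InnerProductSpace

theorem le_nat_mul_of_le_add {f : ℕ → ℝ} {C : ℝ} (h₀ : f 0 ≤ 0)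
    (hstep : ∀ k, f (k + 1) ≤ f k + C) (k : ℕ) : f k ≤ k * C := by
  induction k with
  | zero => simpa using h₀
  | succ k ih => push_cast; linarith [hstep k]

theorem stmt4_general (m : ℕ) (ψ : EuclideanSpace ℝ (Fin m) → ℝ)
    (ystar : EuclideanSpace ℝ (Fin m))
    (lam p c : ℝ) (hlam : 0 < lam) (hp : 1 ≤ p)
    (y v w : ℕ → EuclideanSpace ℝ (Fin m)) (ε : ℕ → ℝ)
    (hε : ∀ k, ε k = c / ((k : ℝ) + 1) ^ (p + 1))
    (hw : ∀ k, w k = (((k : ℝ) ^ (p + 1)) / (((k : ℝ) + 1) ^ (p + 1))) • y k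
        + (1 - ((k : ℝ) ^ (p + 1)) / (((k : ℝ) + 1) ^ (p + 1))) • y 0)
    (hsub : ∀ k, ∀ z, ψ z ≥ ψ (y (k + 1)) + ⟪v k, z - y (k + 1)⟫ - ε k)
    (hupd : ∀ k, v k =
        (lam ^ (-p) * ‖w k - y (k + 1)‖ ^ (p - 1) : ℝ) • (w k - y (k + 1))) :
    ∀ k : ℕ, 1 ≤ k →
      ψ (y k) - ψ ystar ≤
        (lam ^ (-p) * (p + 1) ^ p * ‖y 0 - ystar‖ ^ (p + 1) + c) / (k : ℝ) ^ p := by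
  have hp₀ : 0 < p := by linarith
  have hlyapunov : ∀ k : ℕ, ((k + 1 : ℕ) : ℝ) ^ (p + 1) * (ψ (y (k + 1)) - ψ ystar) ≤
      (k : ℝ) ^ (p + 1) * (ψ (y k) - ψ ystar) +
        (lam ^ (-p) * (p + 1) ^ p * ‖y 0 - ystar‖ ^ (p + 1) + c) := by
    intro k
    have h := power_prox_lyapunov_step (ystar := ystar) hp₀ (Real.rpow_nonneg hlam.le _)
      k.cast_nonneg (hw k) (hsub k) (hupd k)
    rw [hε k, mul_div_cancel₀ _ (by positivity)] at h
    push_cast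
    linarith
  intro k hk
  have hk₀ : (0 : ℝ) < k := by exact_mod_cast hk
  have h := le_nat_mul_of_le_add (f := fun k : ℕ => (k : ℝ) ^ (p + 1) * (ψ (y k) - ψ ystar))
    (by simp [Real.zero_rpow (by linarith : p + 1 ≠ 0)]) hlyapunov k
  rw [Real.rpow_add_one hk₀.ne'] at h
  rw [le_div_iff₀ (by positivity)]
  exact le_of_mul_le_mul_left (by linear_combination h) hk₀

/-- Global sublinear rate of the inexact power proximal point method with averaging
(`θ_k = A_k/A_{k+1}`, `A_k = k^{p+1}`) under `ε_k`-subgradient errors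
`ε_k = c/(k+1)^{p+1}`: for all `k ≥ 1`,
`ψ(y^k) − ψ(y⋆) ≤ (λ^{−p}(p+1)^p ‖y⁰ − y⋆‖^{p+1} + c)/k^p`. -/
theorem stmt4 (m : ℕ) (ψ : EuclideanSpace ℝ (Fin m) → ℝ)
    (hψconv : ConvexOn ℝ Set.univ ψ) (hψlsc : LowerSemicontinuous ψ)
    (ystar : EuclideanSpace ℝ (Fin m)) (hmin : ∀ y, ψ ystar ≤ ψ y)
    (lam p c : ℝ) (hlam : 0 < lam) (hp : 1 ≤ p) (hc : 0 ≤ c)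
    (y v w : ℕ → EuclideanSpace ℝ (Fin m)) (ε : ℕ → ℝ)
    (hε : ∀ k, ε k = c / ((k : ℝ) + 1) ^ (p + 1))
    (hw : ∀ k, w k = (((k : ℝ) ^ (p + 1)) / (((k : ℝ) + 1) ^ (p + 1))) • y k
        + (1 - ((k : ℝ) ^ (p + 1)) / (((k : ℝ) + 1) ^ (p + 1))) • y 0)
    (hsub : ∀ k, ∀ z, ψ z ≥ ψ (y (k + 1)) + ⟪v k, z - y (k + 1)⟫ - ε k)
    (hupd : ∀ k, v k =
        (lam ^ (-p) * ‖w k - y (k + 1)‖ ^ (p - 1) : ℝ) • (w k - y (k + 1))) :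
    ∀ k : ℕ, 1 ≤ k →
      ψ (y k) - ψ ystar ≤
        (lam ^ (-p) * (p + 1) ^ p * ‖y 0 - ystar‖ ^ (p + 1) + c) / (k : ℝ) ^ p :=
  stmt4_general m ψ ystar lam p c hlam hp y v w ε hε hw hsub hupd
end

section
/- Let e : ℝᵐ → ℝ be convex and differentiable, φ = (1/(p+1))‖·‖^{p+1} with dual norm ‖·‖_*, λ > 0, p ≥ 1, and suppose ∇e(y^k) = ∇φ(λ^{−1}(y^k − P(y^k))) for some point P(y^k). Then for all y ∈ ℝᵐ: e(y^k) ≤ e(y) + λ^{−p}φ(y^k − P(y^k)) + p^p · λ^{−p}φ(y − y^k). -/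
/-!
Convexity and Cauchy–Schwarz give `e yᵏ ≤ e y + ‖∇e yᵏ‖ ‖y - yᵏ‖`, and the prescribed gradient
has norm `λ⁻ᵖ ‖yᵏ - P yᵏ‖ ^ p`. Young's inequality with exponents `(p + 1) / p` and `p + 1`,
applied after moving the factor `σ = p ^ (p / (p + 1))` from one side of the product to the other,
splits `‖yᵏ - P yᵏ‖ ^ p ‖y - yᵏ‖` into the two `φ`-terms, the second one weighted by
`σ ^ (p + 1) = p ^ p`.
-/

open Real Set

theorem ConvexOn.apply_sub_le_of_hasFDerivAt {E : Type*} [NormedAddCommGroup E] [NormedSpace ℝ E]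
    {s : Set E} {f : E → ℝ} {f' : E →L[ℝ] ℝ} {x y : E} (hf : ConvexOn ℝ s f)
    (hx : x ∈ s) (hy : y ∈ s) (hf' : HasFDerivAt f f' x) :
    f' (y - x) ≤ f y - f x := by
  have hline : ConvexOn ℝ (AffineMap.lineMap (k := ℝ) x y ⁻¹' s)
      (f ∘ AffineMap.lineMap (k := ℝ) x y) :=
    hf.comp_affineMap _
  have hderiv : HasDerivAt (f ∘ AffineMap.lineMap (k := ℝ) x y) (f' (y - x)) 0 := by
    refine HasFDerivAt.comp_hasDerivAt (0 : ℝ) ?_ AffineMap.hasDerivAt_lineMap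
    simpa using hf'
  simpa [slope_def_field] using
    hline.le_slope_of_hasDerivAt (by simpa using hx) (by simpa using hy) zero_lt_one hderiv

theorem ConvexOn.inner_sub_le_of_hasGradientAt {F : Type*} [NormedAddCommGroup F]
    [InnerProductSpace ℝ F] [CompleteSpace F] {s : Set F} {f : F → ℝ} {g x y : F}
    (hf : ConvexOn ℝ s f) (hx : x ∈ s) (hy : y ∈ s) (hg : HasGradientAt f g x) :
    inner ℝ g (y - x) ≤ f y - f x :=
  hf.apply_sub_le_of_hasFDerivAt hx hy hg.hasFDerivAt

theorem norm_rpow_sub_one_smul {E : Type*} [SeminormedAddCommGroup E] [NormedSpace ℝ E]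
    {p : ℝ} (hp : 0 < p) (z : E) : ‖(‖z‖ ^ (p - 1)) • z‖ = ‖z‖ ^ p := by
  rw [norm_smul, norm_of_nonneg (rpow_nonneg (norm_nonneg z) _)]
  rcases eq_or_ne ‖z‖ 0 with hz | hz
  · rw [hz, mul_zero, zero_rpow hp.ne']
  · rw [← rpow_add_one hz, sub_add_cancel]

theorem Real.young_inequality_rpow_mul_of_nonneg {p a b : ℝ} (hp : 0 < p) (ha : 0 ≤ a)
    (hb : 0 ≤ b) :
    a ^ p * b ≤ a ^ (p + 1) / (p + 1) + p ^ p * b ^ (p + 1) / (p + 1) := by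
  have hp1 : 0 < p + 1 := by linarith
  set σ := p ^ (p / (p + 1))
  have hσ : 0 < σ := rpow_pos_of_pos hp _
  have hconj : ((p + 1) / p).HolderConjugate (p + 1) := by
    rw [holderConjugate_iff]
    exact ⟨by rw [lt_div_iff₀ hp]; linarith, by field_simp⟩
  have hyoung := young_inequality_of_nonneg (div_nonneg (rpow_nonneg ha p) hσ.le)
    (mul_nonneg hσ.le hb) hconj
  have hσ_pow : σ ^ ((p + 1) / p) = p := by
    rw [← rpow_mul hp.le, div_mul_div_cancel₀ hp1.ne', div_self hp.ne', rpow_one]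
  have hleft : (a ^ p / σ) ^ ((p + 1) / p) = a ^ (p + 1) / p := by
    rw [div_rpow (rpow_nonneg ha p) hσ.le, ← rpow_mul ha, mul_div_cancel₀ _ hp.ne', hσ_pow]
  have hright : (σ * b) ^ (p + 1) = p ^ p * b ^ (p + 1) := by
    rw [mul_rpow hσ.le hb, ← rpow_mul hp.le, div_mul_cancel₀ _ hp1.ne']
  have hprod : a ^ p / σ * (σ * b) = a ^ p * b := by field_simp
  rw [hprod, hleft, hright] at hyoung
  calc a ^ p * b ≤ a ^ (p + 1) / p / ((p + 1) / p) + p ^ p * b ^ (p + 1) / (p + 1) := hyoung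
    _ = _ := by field_simp

/-- If `e` is convex and differentiable with
`∇e(y^k) = ∇φ(λ^{−1}(y^k − P(y^k)))` where `φ = (1/(p+1))‖·‖^{p+1}`
(Euclidean, self-dual norm), then for all `y`:
`e(y^k) ≤ e(y) + λ^{−p}φ(y^k − P(y^k)) + p^p λ^{−p}φ(y − y^k)`. -/
theorem stmt9 (m : ℕ) (e : EuclideanSpace ℝ (Fin m) → ℝ)
    (hconv : ConvexOn ℝ Set.univ e)
    (lam p : ℝ) (hlam : 0 < lam) (hp : 1 ≤ p)
    (yk Pyk : EuclideanSpace ℝ (Fin m))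
    (hgrad : HasGradientAt e
      ((‖(lam⁻¹ : ℝ) • (yk - Pyk)‖ ^ (p - 1) : ℝ) • ((lam⁻¹ : ℝ) • (yk - Pyk))) yk) :
    ∀ y, e yk ≤ e y
        + lam ^ (-p) * ((1 / (p + 1)) * ‖yk - Pyk‖ ^ (p + 1))
        + p ^ p * (lam ^ (-p) * ((1 / (p + 1)) * ‖y - yk‖ ^ (p + 1))) := by
  intro y
  have hp0 : 0 < p := by linarith
  have hsupport : e yk ≤ e y + ‖lam⁻¹ • (yk - Pyk)‖ ^ p * ‖y - yk‖ := by
    have hinner := hconv.inner_sub_le_of_hasGradientAt (mem_univ yk) (mem_univ y) hgrad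
    have hcs := (abs_le.mp (abs_real_inner_le_norm
      ((‖lam⁻¹ • (yk - Pyk)‖ ^ (p - 1)) • lam⁻¹ • (yk - Pyk)) (y - yk))).1
    rw [norm_rpow_sub_one_smul hp0] at hcs
    linarith
  have hnorm : ‖lam⁻¹ • (yk - Pyk)‖ ^ p = lam ^ (-p) * ‖yk - Pyk‖ ^ p := by
    rw [norm_smul, norm_inv, norm_of_nonneg hlam.le, mul_rpow (inv_nonneg.2 hlam.le)
      (norm_nonneg _), inv_rpow hlam.le, rpow_neg hlam.le]
  have hyoung := young_inequality_rpow_mul_of_nonneg hp0 (norm_nonneg (yk - Pyk))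
    (norm_nonneg (y - yk))
  calc e yk ≤ e y + lam ^ (-p) * (‖yk - Pyk‖ ^ p * ‖y - yk‖) := by
        rw [hnorm, mul_assoc] at hsupport; exact hsupport
    _ ≤ e y + lam ^ (-p) * (‖yk - Pyk‖ ^ (p + 1) / (p + 1)
          + p ^ p * ‖y - yk‖ ^ (p + 1) / (p + 1)) := by gcongr
    _ = _ := by ring
end

section
/- Let ψ : ℝᵐ → ℝ ∪ {+∞} be proper lsc convex with compact minimizer set Y⋆ and optimal value ψ⋆, and suppose ψ(y) − ψ⋆ ≥ μ·d(y, Y⋆)^ν on a δ-neighborhood of Y⋆, with μ > 0, ν > 1. Let p > ν − 1, λ > 0, φ = (1/(p+1))‖·‖^{p+1}, and y^{k+1} = argmin_y {ψ(y) + λ^{−p}φ(y − y^k)}. Then, for k sufficiently large, d(y^{k+1}, Y⋆) ≤ (1/(λμ^{1/p}))^{p/(ν−1)} · d(y^k, Y⋆)^{p/(ν−1)}. -/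
/-!
Testing the optimality of `y⁺ = prox(x)` against `y⁺ + t (η - y⁺)` and letting `t → 0` gives,
by convexity of `ψ` and of `s ↦ s ^ (p + 1)`, the gap bound
`ψ y⁺ - ψ η ≤ λ^(-p) ‖y⁺ - x‖ ^ p ‖η - y⁺‖`; testing it against a nearest point of `Y⋆` to `x`
gives `‖y⁺ - x‖ ≤ d(x, Y⋆)`. Taking for `η` a nearest point of `Y⋆` to `y⁺` and combining with the
growth condition yields `μ d(y⁺)^ν ≤ λ^(-p) d(x)^p d(y⁺)`, which is the claimed rate.

The growth condition only applies within `δ` of `Y⋆`. The steps `‖y⁺ - x‖` tend to `0`, since each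
one decreases `ψ` by `λ^(-p) ‖y⁺ - x‖^(p+1) / (p+1)`; and convexity turns the growth at distance
`δ / 2` into linear growth beyond it, which the gap bound rules out once the steps are small.
-/

open Set Filter Metric Topology

lemma rpow_sub_rpow_le_mul_sub {a b q : ℝ} (hb : 0 ≤ b) (hba : b ≤ a) (hq : 1 ≤ q) :
    a ^ q - b ^ q ≤ q * a ^ (q - 1) * (a - b) := by
  rcases hba.eq_or_lt with rfl | hlt
  · simp
  have hslope := (convexOn_rpow hq).slope_le_of_hasDerivAt hb (hb.trans hlt.le) hlt
    (Real.hasDerivAt_rpow_const (Or.inr hq))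
  rwa [slope_def_field, div_le_iff₀ (sub_pos.2 hlt)] at hslope

lemma le_rpow_div_of_mul_rpow_le {μ ν p d X : ℝ} (hμ : 0 < μ) (hν : 1 < ν) (hX : 0 ≤ X)
    (hd : 0 ≤ d) (h : μ * d ^ ν ≤ μ * X ^ p * d) : d ≤ X ^ (p / (ν - 1)) := by
  rcases hd.eq_or_lt with rfl | hd
  · exact Real.rpow_nonneg hX _
  have hsplit : d ^ ν = d ^ (ν - 1) * d := by rw [← Real.rpow_add_one hd.ne', sub_add_cancel]
  have hle : d ^ (ν - 1) ≤ X ^ p :=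
    le_of_mul_le_mul_right (a := μ * d) (by rw [hsplit] at h; linarith) (mul_pos hμ hd)
  rwa [div_eq_mul_inv, Real.rpow_mul hX,
    Real.le_rpow_inv_iff_of_pos hd.le (Real.rpow_nonneg hX _) (by linarith)]

section PowerProx

variable {E : Type*} [NormedAddCommGroup E] {ψ : E → ℝ} {c p : ℝ}

lemma norm_sub_le_of_powerProx {x a η : E} (hc : 0 < c) (hp : 0 < p + 1)
    (hprox : ∀ z, ψ a + c * (1 / (p + 1) * ‖a - x‖ ^ (p + 1))
      ≤ ψ z + c * (1 / (p + 1) * ‖z - x‖ ^ (p + 1))) (hη : ψ η ≤ ψ a) :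
    ‖a - x‖ ≤ ‖η - x‖ := by
  have hpow : ‖a - x‖ ^ (p + 1) ≤ ‖η - x‖ ^ (p + 1) := by
    have := hprox η
    exact le_of_mul_le_mul_left (a := c * (1 / (p + 1))) (by linarith) (by positivity)
  exact (Real.rpow_le_rpow_iff (norm_nonneg _) (norm_nonneg _) hp).1 hpow

lemma tendsto_norm_sub_of_powerProx {y : ℕ → E} (hc : 0 < c) (hp : 0 < p + 1)
    (hbdd : BddBelow (range ψ))
    (hprox : ∀ k z, ψ (y (k + 1)) + c * (1 / (p + 1) * ‖y (k + 1) - y k‖ ^ (p + 1))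
      ≤ ψ z + c * (1 / (p + 1) * ‖z - y k‖ ^ (p + 1))) :
    Tendsto (fun k ↦ ‖y (k + 1) - y k‖) atTop (𝓝 0) := by
  have hdesc : ∀ k, ψ (y (k + 1)) + c * (1 / (p + 1) * ‖y (k + 1) - y k‖ ^ (p + 1)) ≤ ψ (y k) :=
    fun k ↦ by simpa [Real.zero_rpow hp.ne'] using hprox k (y k)
  have hanti : Antitone (ψ ∘ y) := antitone_nat_of_succ_le fun k ↦ by
    have := mul_nonneg hc.le (mul_nonneg (one_div_nonneg.2 hp.le)
      (Real.rpow_nonneg (norm_nonneg (y (k + 1) - y k)) (p + 1)))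
    simp only [Function.comp_apply]
    linarith [hdesc k]
  obtain ⟨l, hl⟩ : ∃ l, Tendsto (ψ ∘ y) atTop (𝓝 l) :=
    ⟨_, tendsto_atTop_ciInf hanti (hbdd.mono (range_comp_subset_range y ψ))⟩
  have hdiff : Tendsto (fun k ↦ ψ (y k) - ψ (y (k + 1))) atTop (𝓝 0) := by
    simpa using hl.sub (hl.comp (tendsto_add_atTop_nat 1))
  have hpow : Tendsto (fun k ↦ ‖y (k + 1) - y k‖ ^ (p + 1)) atTop (𝓝 0) := by
    refine squeeze_zero (fun k ↦ Real.rpow_nonneg (norm_nonneg _) _) (fun k ↦ ?_)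
      (by simpa using hdiff.const_mul ((p + 1) / c))
    rw [div_mul_eq_mul_div, le_div_iff₀ hc]
    have := hdesc k
    field_simp at this
    linarith
  simpa [← Real.rpow_mul (norm_nonneg _), mul_inv_cancel₀ hp.ne'] using
    hpow.rpow_const_nhds_zero (inv_pos.2 hp)

variable {S : Set E}

lemma norm_sub_le_infDist_of_powerProx {x a : E} (hc : 0 < c) (hp : 0 < p + 1)
    (hS : IsCompact S) (hne : S.Nonempty) (hSmin : ∀ η ∈ S, ψ η ≤ ψ a)
    (hprox : ∀ z, ψ a + c * (1 / (p + 1) * ‖a - x‖ ^ (p + 1))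
      ≤ ψ z + c * (1 / (p + 1) * ‖z - x‖ ^ (p + 1))) :
    ‖a - x‖ ≤ infDist x S := by
  obtain ⟨η, hη, hd⟩ := hS.exists_infDist_eq_dist hne x
  rw [hd, dist_comm, dist_eq_norm]
  exact norm_sub_le_of_powerProx hc hp hprox (hSmin η hη)

variable [NormedSpace ℝ E]

lemma sub_le_mul_norm_of_powerProx {x a : E} (hψ : ConvexOn ℝ univ ψ) (hc : 0 ≤ c) (hp : 0 ≤ p)
    (hprox : ∀ z, ψ a + c * (1 / (p + 1) * ‖a - x‖ ^ (p + 1))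
      ≤ ψ z + c * (1 / (p + 1) * ‖z - x‖ ^ (p + 1))) (η : E) :
    ψ a - ψ η ≤ c * ‖a - x‖ ^ p * ‖η - a‖ := by
  set s := a - x
  set v := η - a
  have hbound : ∀ t ∈ Ioc (0 : ℝ) 1, ψ a - ψ η ≤ c * (‖s‖ + t * ‖v‖) ^ p * ‖v‖ := by
    rintro t ⟨ht0, ht1⟩
    have hconv : ψ (a + t • v) ≤ (1 - t) * ψ a + t * ψ η := by
      have hz : (1 - t) • a + t • η = a + t • v := by
        simp only [v, smul_sub, sub_smul, one_smul]
        abel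
      exact hz ▸ hψ.2 (mem_univ a) (mem_univ η) (sub_nonneg.2 ht1) ht0.le (sub_add_cancel 1 t)
    have hopt := hprox (a + t • v)
    rw [show a + t • v - x = s + t • v by simp only [s]; abel] at hopt
    have hnorm : ‖s + t • v‖ ^ (p + 1) - ‖s‖ ^ (p + 1)
        ≤ (p + 1) * (‖s‖ + t * ‖v‖) ^ p * (t * ‖v‖) := by
      have htri : ‖s + t • v‖ ≤ ‖s‖ + t * ‖v‖ := by
        simpa [norm_smul, abs_of_pos ht0] using norm_add_le s (t • v)
      calc ‖s + t • v‖ ^ (p + 1) - ‖s‖ ^ (p + 1) ≤ (‖s‖ + t * ‖v‖) ^ (p + 1) - ‖s‖ ^ (p + 1) := by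
            gcongr
        _ ≤ (p + 1) * (‖s‖ + t * ‖v‖) ^ (p + 1 - 1) * (‖s‖ + t * ‖v‖ - ‖s‖) :=
            rpow_sub_rpow_le_mul_sub (norm_nonneg _) (le_add_of_nonneg_right (by positivity))
              (by linarith)
        _ = (p + 1) * (‖s‖ + t * ‖v‖) ^ p * (t * ‖v‖) := by
            rw [add_sub_cancel_right, add_sub_cancel_left]
    have hscaled : t * (ψ a - ψ η) ≤ t * (c * (‖s‖ + t * ‖v‖) ^ p * ‖v‖) :=
      calc t * (ψ a - ψ η) ≤ c / (p + 1) * (‖s + t • v‖ ^ (p + 1) - ‖s‖ ^ (p + 1)) := by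
            linear_combination hopt + hconv
        _ ≤ c / (p + 1) * ((p + 1) * (‖s‖ + t * ‖v‖) ^ p * (t * ‖v‖)) := by gcongr
        _ = t * (c * (‖s‖ + t * ‖v‖) ^ p * ‖v‖) := by field_simp
    exact le_of_mul_le_mul_left hscaled ht0
  have hcont : ContinuousWithinAt (fun t : ℝ ↦ c * (‖s‖ + t * ‖v‖) ^ p * ‖v‖) (Ioi 0) 0 :=
    ((continuous_const.mul ((continuous_const.add (continuous_id.mul continuous_const)).rpow_const
      fun _ ↦ Or.inr hp)).mul continuous_const).continuousWithinAt
  simpa using ge_of_tendsto hcont (eventually_of_mem (Ioc_mem_nhdsGT one_pos) hbound)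

lemma sub_le_mul_infDist_of_powerProx {x a : E} {ψstar : ℝ} (hψ : ConvexOn ℝ univ ψ)
    (hc : 0 ≤ c) (hp : 0 ≤ p) (hS : IsCompact S) (hne : S.Nonempty)
    (hSψ : ∀ η ∈ S, ψ η = ψstar)
    (hprox : ∀ z, ψ a + c * (1 / (p + 1) * ‖a - x‖ ^ (p + 1))
      ≤ ψ z + c * (1 / (p + 1) * ‖z - x‖ ^ (p + 1))) :
    ψ a - ψstar ≤ c * ‖a - x‖ ^ p * infDist a S := by
  obtain ⟨η, hη, hd⟩ := hS.exists_infDist_eq_dist hne a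
  rw [hd, dist_comm, dist_eq_norm, ← hSψ η hη]
  exact sub_le_mul_norm_of_powerProx hψ hc hp hprox η

lemma ConvexOn.mul_infDist_le_of_infDist_eq {ψstar ρ m : ℝ} {y : E} (hψ : ConvexOn ℝ univ ψ)
    (hS : IsCompact S) (hne : S.Nonempty) (hSψ : ∀ η ∈ S, ψ η = ψstar) (hρ : 0 < ρ)
    (hlevel : ∀ z, infDist z S = ρ → m ≤ ψ z - ψstar) (hy : ρ ≤ infDist y S) :
    m * infDist y S ≤ ρ * (ψ y - ψstar) := by
  obtain ⟨η, hη, hd⟩ := hS.exists_infDist_eq_dist hne y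
  set d := infDist y S
  have hd0 : 0 < d := hρ.trans_le hy
  set θ := ρ / d
  have hθ1 : θ ≤ 1 := (div_le_one hd0).2 hy
  have hθd : θ * d = ρ := div_mul_cancel₀ ρ hd0.ne'
  set z := η + θ • (y - η)
  have hzη : dist z η = ρ := by
    rw [dist_eq_norm, add_sub_cancel_left, norm_smul, Real.norm_of_nonneg (by positivity),
      ← dist_eq_norm, ← hd, hθd]
  have hyz : dist y z = d - ρ := by
    rw [dist_eq_norm, show y - z = (1 - θ) • (y - η) by simp only [z, sub_smul, one_smul]; abel,
      norm_smul, Real.norm_of_nonneg (sub_nonneg.2 hθ1), ← dist_eq_norm, ← hd, sub_mul, one_mul,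
      hθd]
  have hz : infDist z S = ρ := le_antisymm ((infDist_le_dist_of_mem hη).trans hzη.le)
    (by linarith [infDist_le_infDist_add_dist (x := y) (y := z) (s := S)])
  have hconv : ψ z ≤ (1 - θ) * ψ η + θ * ψ y := by
    have hz' : (1 - θ) • η + θ • y = z := by simp only [z, smul_sub, sub_smul, one_smul]; abel
    exact hz' ▸ hψ.2 (mem_univ η) (mem_univ y) (sub_nonneg.2 hθ1) (by positivity)
      (sub_add_cancel 1 θ)
  have hm : m ≤ θ * (ψ y - ψstar) := by
    have := hlevel z hz
    rw [hSψ η hη] at hconv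
    linarith
  calc m * d ≤ θ * (ψ y - ψstar) * d := mul_le_mul_of_nonneg_right hm hd0.le
    _ = ρ * (ψ y - ψstar) := by rw [mul_right_comm, hθd]

lemma eventually_infDist_lt_of_powerProx {ψstar ρ m : ℝ} {y : ℕ → E} (hψ : ConvexOn ℝ univ ψ)
    (hS : IsCompact S) (hne : S.Nonempty) (hSψ : ∀ η ∈ S, ψ η = ψstar)
    (hmin : ∀ z, ψstar ≤ ψ z) (hc : 0 < c) (hp : 0 < p) (hρ : 0 < ρ) (hm : 0 < m)
    (hlevel : ∀ z, infDist z S = ρ → m ≤ ψ z - ψstar)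
    (hprox : ∀ k z, ψ (y (k + 1)) + c * (1 / (p + 1) * ‖y (k + 1) - y k‖ ^ (p + 1))
      ≤ ψ z + c * (1 / (p + 1) * ‖z - y k‖ ^ (p + 1))) :
    ∀ᶠ k in atTop, infDist (y (k + 1)) S < ρ := by
  have hsteps := tendsto_norm_sub_of_powerProx hc (by linarith) ⟨ψstar, forall_mem_range.2 hmin⟩
    hprox
  have hsmall : ∀ᶠ k in atTop, ρ * (c * ‖y (k + 1) - y k‖ ^ p) < m := by
    have := ((hsteps.rpow_const_nhds_zero hp).const_mul c).const_mul ρ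
    rw [mul_zero, mul_zero] at this
    exact this.eventually (gt_mem_nhds hm)
  filter_upwards [hsmall] with k hk
  by_contra! hfar
  have hgrowth := hψ.mul_infDist_le_of_infDist_eq hS hne hSψ hρ hlevel hfar
  have hgap := sub_le_mul_infDist_of_powerProx hψ hc.le hp.le hS hne hSψ (hprox k)
  have hd : 0 < infDist (y (k + 1)) S := hρ.trans_le hfar
  nlinarith [mul_le_mul_of_nonneg_left hgap hρ.le]

lemma infDist_le_rpow_of_powerProx {ψstar μ ν b : ℝ} {x a : E} (hψ : ConvexOn ℝ univ ψ)
    (hμ : 0 < μ) (hν : 1 < ν) (hp : 0 < p) (hb : 0 < b) (hS : IsCompact S) (hne : S.Nonempty)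
    (hSψ : ∀ η ∈ S, ψ η = ψstar) (hmin : ∀ z, ψstar ≤ ψ z)
    (hgrowth : μ * infDist a S ^ ν ≤ ψ a - ψstar)
    (hprox : ∀ z, ψ a + μ * b ^ p * (1 / (p + 1) * ‖a - x‖ ^ (p + 1))
      ≤ ψ z + μ * b ^ p * (1 / (p + 1) * ‖z - x‖ ^ (p + 1))) :
    infDist a S ≤ (b * infDist x S) ^ (p / (ν - 1)) := by
  have hc : 0 < μ * b ^ p := by positivity
  have hstep : ‖a - x‖ ≤ infDist x S :=
    norm_sub_le_infDist_of_powerProx hc (by linarith) hS hne (fun η hη ↦ hSψ η hη ▸ hmin a) hprox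
  refine le_rpow_div_of_mul_rpow_le hμ hν (mul_nonneg hb.le infDist_nonneg) infDist_nonneg ?_
  calc μ * infDist a S ^ ν ≤ ψ a - ψstar := hgrowth
    _ ≤ μ * b ^ p * ‖a - x‖ ^ p * infDist a S :=
      sub_le_mul_infDist_of_powerProx hψ hc.le hp.le hS hne hSψ hprox
    _ ≤ μ * b ^ p * infDist x S ^ p * infDist a S := by
      have := Real.rpow_le_rpow (norm_nonneg _) hstep hp.le
      gcongr
      exact infDist_nonneg
    _ = μ * (b * infDist x S) ^ p * infDist a S := by
      rw [Real.mul_rpow hb.le infDist_nonneg, mul_assoc μ]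

end PowerProx

theorem stmt10_general (m : ℕ) (ψ : EuclideanSpace ℝ (Fin m) → ℝ)
    (hψconv : ConvexOn ℝ Set.univ ψ)
    (Ystar : Set (EuclideanSpace ℝ (Fin m)))
    (hYstar : Ystar = {y | ∀ z, ψ y ≤ ψ z})
    (hne : Ystar.Nonempty) (hcpt : IsCompact Ystar)
    (ψstar : ℝ) (hψstar : ∀ y ∈ Ystar, ψ y = ψstar)
    (μ ν δ lam p : ℝ) (hμ : 0 < μ) (hν : 1 < ν) (hδ : 0 < δ)
    (hlam : 0 < lam) (hp : ν - 1 < p)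
    (hgrowth : ∀ y, Metric.infDist y Ystar < δ →
        ψ y - ψstar ≥ μ * (Metric.infDist y Ystar) ^ ν)
    (y : ℕ → EuclideanSpace ℝ (Fin m))
    (hupd : ∀ k, ∀ z, ψ (y (k + 1)) + lam ^ (-p) * ((1 / (p + 1)) * ‖y (k + 1) - y k‖ ^ (p + 1))
        ≤ ψ z + lam ^ (-p) * ((1 / (p + 1)) * ‖z - y k‖ ^ (p + 1))) :
    ∃ K : ℕ, ∀ k ≥ K,
      Metric.infDist (y (k + 1)) Ystar ≤
        (1 / (lam * μ ^ (1 / p))) ^ (p / (ν - 1)) *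
          (Metric.infDist (y k) Ystar) ^ (p / (ν - 1)) := by
  have hp0 : 0 < p := by linarith
  have hc : 0 < lam ^ (-p) := Real.rpow_pos_of_pos hlam _
  have hYmin : ∀ η ∈ Ystar, ∀ z, ψ η ≤ ψ z := by rw [hYstar]; exact fun η hη ↦ hη
  have hmin : ∀ z, ψstar ≤ ψ z := fun z ↦ hne.elim fun η hη ↦ hψstar η hη ▸ hYmin η hη z
  have hclose : ∀ᶠ k in atTop, infDist (y (k + 1)) Ystar < δ / 2 :=
    eventually_infDist_lt_of_powerProx hψconv hcpt hne hψstar hmin hc hp0 (half_pos hδ)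
      (by positivity) (fun z hz ↦ hz ▸ hgrowth z (by linarith)) hupd
  obtain ⟨K, hK⟩ := eventually_atTop.mp hclose
  refine ⟨K, fun k hk ↦ ?_⟩
  have hμp : 0 < μ ^ (1 / p) := Real.rpow_pos_of_pos hμ _
  set b := 1 / (lam * μ ^ (1 / p))
  have hb0 : 0 < b := one_div_pos.2 (mul_pos hlam hμp)
  have hb : lam ^ (-p) = μ * b ^ p := by
    rw [Real.div_rpow zero_le_one (mul_pos hlam hμp).le, Real.mul_rpow hlam.le hμp.le,
      ← Real.rpow_mul hμ.le, one_div_mul_cancel hp0.ne', Real.rpow_one, Real.one_rpow,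
      Real.rpow_neg hlam.le]
    field_simp
  rw [← Real.mul_rpow hb0.le infDist_nonneg]
  exact infDist_le_rpow_of_powerProx hψconv hμ hν hp0 hb0 hcpt hne hψstar hmin
    (hgrowth _ (by linarith [hK k hk])) (by rw [← hb]; exact hupd k)

/-- Local superlinear convergence of the exact power proximal point method: if `ψ` is
proper lsc convex with compact minimizer set `Y⋆`, satisfies the growth condition
`ψ(y) − ψ⋆ ≥ μ d(y, Y⋆)^ν` on a `δ`-neighborhood of `Y⋆` with `ν > 1`, and
`p > ν − 1`, then for `k` sufficiently large,
`d(y^{k+1}, Y⋆) ≤ (1/(λμ^{1/p}))^{p/(ν−1)} d(y^k, Y⋆)^{p/(ν−1)}`. -/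
theorem stmt10 (m : ℕ) (ψ : EuclideanSpace ℝ (Fin m) → ℝ)
    (hψconv : ConvexOn ℝ Set.univ ψ) (hψlsc : LowerSemicontinuous ψ)
    (Ystar : Set (EuclideanSpace ℝ (Fin m)))
    (hYstar : Ystar = {y | ∀ z, ψ y ≤ ψ z})
    (hne : Ystar.Nonempty) (hcpt : IsCompact Ystar)
    (ψstar : ℝ) (hψstar : ∀ y ∈ Ystar, ψ y = ψstar)
    (μ ν δ lam p : ℝ) (hμ : 0 < μ) (hν : 1 < ν) (hδ : 0 < δ)
    (hlam : 0 < lam) (hp : ν - 1 < p) (hp1 : 1 ≤ p)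
    (hgrowth : ∀ y, Metric.infDist y Ystar < δ →
        ψ y - ψstar ≥ μ * (Metric.infDist y Ystar) ^ ν)
    (y : ℕ → EuclideanSpace ℝ (Fin m))
    (hupd : ∀ k, ∀ z, ψ (y (k + 1)) + lam ^ (-p) * ((1 / (p + 1)) * ‖y (k + 1) - y k‖ ^ (p + 1))
        ≤ ψ z + lam ^ (-p) * ((1 / (p + 1)) * ‖z - y k‖ ^ (p + 1))) :
    ∃ K : ℕ, ∀ k ≥ K,
      Metric.infDist (y (k + 1)) Ystar ≤
        (1 / (lam * μ ^ (1 / p))) ^ (p / (ν - 1)) *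
          (Metric.infDist (y k) Ystar) ^ (p / (ν - 1)) :=
  stmt10_general m ψ hψconv Ystar hYstar hne hcpt ψstar hψstar μ ν δ lam p hμ hν hδ hlam hp hgrowth
    y hupd
end
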